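/- Let ξ, η, σ ∈ ℝ, and write a ≡ b to mean that a − b is an integer multiple of 2π. Then the following two conditions hold simultaneously — (i) ξ ≡ 2η + σ and ξ ≡ η + 2σ + π, and (ii) ξ ≡ η or ξ ≡ σ + π — if and only if either (ξ ≡ π/2 and η ≡ π/2 and σ ≡ −π/2) or (ξ ≡ −π/2 and η ≡ −π/2 and σ ≡ π/2). -/

import Mathlib

/-!
Everything happens in `Real.Angle = ℝ/2πℤ`. There the two space-resonance equations force
`σ = η + π`, which makes the two time-resonance alternatives coincide (`σ + π = η`, as `2π = 0`);
the first equation then reads `2η = -π = π`, whose solutions are `η = ±π/2`.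
-/

def Mod2Pi (a b : ℝ) : Prop := ∃ k : ℤ, a - b = 2 * Real.pi * k

theorem mod2Pi_iff_coe_eq {a b : ℝ} : Mod2Pi a b ↔ (a : Real.Angle) = b :=
  Real.Angle.angle_eq_iff_two_pi_dvd_sub.symm

namespace Real.Angle

def IsSpaceResonance (ξ η σ : Angle) : Prop := ξ = 2 • η + σ ∧ ξ = η + 2 • σ + π

def IsTimeResonance (ξ η σ : Angle) : Prop := ξ = η ∨ ξ = σ + π

variable {ξ η σ : Angle}

theorem IsSpaceResonance.eq_add_pi (h : IsSpaceResonance ξ η σ) : σ = η + π := by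
  rw [← sub_coe_pi_eq_add_coe_pi]
  linear_combination (norm := module) h.1 - h.2

theorem isSpaceResonance_and_isTimeResonance_iff :
    IsSpaceResonance ξ η σ ∧ IsTimeResonance ξ η σ ↔ 2 • η = π ∧ ξ = η ∧ σ = η + π := by
  constructor
  · rintro ⟨hS, hT⟩
    have hσ : σ = η + π := hS.eq_add_pi
    have hξ : ξ = η := hT.elim id fun h => by rw [h, hσ, add_assoc, coe_pi_add_coe_pi, add_zero]
    refine ⟨?_, hξ, hσ⟩
    rw [← neg_coe_pi]
    linear_combination (norm := module) hξ - hS.1 - hσ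
  · rintro ⟨hη, rfl, rfl⟩
    exact ⟨⟨by linear_combination (norm := module) -hη - coe_pi_add_coe_pi,
      by linear_combination (norm := module) -hη - 2 • coe_pi_add_coe_pi⟩, Or.inl rfl⟩

theorem coe_pi_div_two_add_pi : ((π / 2 : ℝ) : Angle) + π = ((-(π / 2) : ℝ) : Angle) := by
  rw [← coe_add, angle_eq_iff_two_pi_dvd_sub]
  exact ⟨1, by ring⟩

theorem coe_neg_pi_div_two_add_pi : ((-(π / 2) : ℝ) : Angle) + π = ((π / 2 : ℝ) : Angle) := by
  rw [← coe_pi_div_two_add_pi, add_assoc, coe_pi_add_coe_pi, add_zero]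

theorem isSpaceResonance_and_isTimeResonance_iff_pi_div_two :
    IsSpaceResonance ξ η σ ∧ IsTimeResonance ξ η σ ↔
      (ξ = (π / 2 : ℝ) ∧ η = (π / 2 : ℝ) ∧ σ = (-(π / 2) : ℝ)) ∨
        (ξ = (-(π / 2) : ℝ) ∧ η = (-(π / 2) : ℝ) ∧ σ = (π / 2 : ℝ)) := by
  rw [isSpaceResonance_and_isTimeResonance_iff, two_nsmul_eq_pi_iff, neg_div]
  constructor
  · rintro ⟨rfl | rfl, rfl, rfl⟩
    · exact Or.inl ⟨rfl, rfl, coe_pi_div_two_add_pi⟩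
    · exact Or.inr ⟨rfl, rfl, coe_neg_pi_div_two_add_pi⟩
  · rintro (⟨rfl, rfl, rfl⟩ | ⟨rfl, rfl, rfl⟩)
    · exact ⟨Or.inl rfl, rfl, coe_pi_div_two_add_pi.symm⟩
    · exact ⟨Or.inr rfl, rfl, coe_neg_pi_div_two_add_pi.symm⟩

end Real.Angle

/-- The space-time resonance set of the Ablowitz–Ladik phase: the intersection of
the space-resonance conditions `ξ ≡ 2η + σ`, `ξ ≡ η + 2σ + π` with the
time-resonance condition `ξ ≡ η` or `ξ ≡ σ + π` is exactly
`ξ ≡ η ≡ π/2, σ ≡ −π/2` or `ξ ≡ η ≡ −π/2, σ ≡ π/2` (all mod `2π`). -/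
theorem al_space_time_resonances (ξ η σ : ℝ) :
    ((Mod2Pi ξ (2 * η + σ) ∧ Mod2Pi ξ (η + 2 * σ + Real.pi)) ∧
        (Mod2Pi ξ η ∨ Mod2Pi ξ (σ + Real.pi))) ↔
      ((Mod2Pi ξ (Real.pi / 2) ∧ Mod2Pi η (Real.pi / 2) ∧ Mod2Pi σ (-(Real.pi / 2))) ∨
        (Mod2Pi ξ (-(Real.pi / 2)) ∧ Mod2Pi η (-(Real.pi / 2)) ∧ Mod2Pi σ (Real.pi / 2))) := by
  simp only [mod2Pi_iff_coe_eq, two_mul, Real.Angle.coe_add, ← two_nsmul, Real.Angle.coe_nsmul]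
  exact Real.Angle.isSpaceResonance_and_isTimeResonance_iff_pi_div_two
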